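/- For every smooth compactly supported (or sufficiently decaying) function y on [0,∞) with y(0) = 0 and ∫₀^∞ y(x)² dx = 1, one has ∫₀^∞ (4y'(x)² + x² y(x)²) dx ≥ 6, with equality for y(x) = (2/π)^{1/4} x e^{−x²/4}. -/

import Mathlib

open MeasureTheory Set Filter Real Topology

lemma intOn_pow_exp (n : ℕ) : IntegrableOn (fun x : ℝ => x ^ n * Real.exp (-(1/2) * x ^ 2)) (Ioi 0) := by
  have h := integrableOn_rpow_mul_exp_neg_mul_sq (b := 1/2) (by norm_num) (s := (n:ℝ))
    (lt_of_lt_of_le (by norm_num) (Nat.cast_nonneg n))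
  apply h.congr_fun ?_ measurableSet_Ioi
  intro x hx
  simp only [Real.rpow_natCast]

lemma tendsto_pow_exp (n : ℕ) : Tendsto (fun x : ℝ => x ^ n * Real.exp (-(1/2) * x ^ 2)) atTop (nhds 0) := by
  have h := rpow_mul_exp_neg_mul_sq_isLittleO_exp_neg (b := 1/2) (by norm_num) (n : ℝ)
  have h2 : Tendsto (fun x : ℝ => Real.exp (-(1/2) * x)) atTop (nhds 0) := by
    apply Real.tendsto_exp_atBot.comp
    exact (tendsto_id.const_mul_atTop_of_neg (by norm_num)).comp tendsto_id
  have h3 := h.isBigO.trans_tendsto h2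
  apply h3.congr'
  filter_upwards [eventually_gt_atTop (0:ℝ)] with x hx
  simp only [Real.rpow_natCast]

lemma intOn_E : IntegrableOn (fun x : ℝ => Real.exp (-(1/2) * x ^ 2)) (Ioi 0) := by
  simpa using intOn_pow_exp 0

lemma int_sq_exp : ∫ x in Ioi (0:ℝ), x ^ 2 * Real.exp (-(1/2) * x ^ 2)
    = ∫ x in Ioi (0:ℝ), Real.exp (-(1/2) * x ^ 2) := by
  have hd : ∀ x : ℝ, HasDerivAt (fun x : ℝ => -(x * Real.exp (-(1/2) * x ^ 2)))
      (x ^ 2 * Real.exp (-(1/2) * x ^ 2) - Real.exp (-(1/2) * x ^ 2)) x := by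
    intro x
    have h1 := ((hasDerivAt_pow 2 x).const_mul (-(1/2) : ℝ)).exp
    have h3 := ((hasDerivAt_id x).mul h1).neg
    refine h3.congr_deriv ?_
    simp [pow_one]; ring
  have key := integral_Ioi_of_hasDerivAt_of_tendsto (a := 0) (m := 0)
    (Continuous.continuousWithinAt (by fun_prop))
    (fun x _ => hd x)
    ((intOn_pow_exp 2).sub intOn_E)
    (by simpa using (tendsto_pow_exp 1).neg)
  rw [integral_sub (intOn_pow_exp 2) intOn_E] at key
  simp only [zero_mul, neg_zero, sub_zero] at key
  linarith

lemma int_E_val : ∫ x in Ioi (0:ℝ), Real.exp (-(1/2) * x ^ 2) = Real.sqrt (2*Real.pi) / 2 := by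
  rw [integral_gaussian_Ioi, show Real.pi / (1/2) = 2 * Real.pi by ring]

lemma exp_sq (x : ℝ) : Real.exp (-x ^ 2 / 4) ^ 2 = Real.exp (-(1/2) * x ^ 2) := by
  rw [sq, ← Real.exp_add]; congr 1; ring

lemma c_sq : ((2 / Real.pi) ^ ((1:ℝ)/4)) ^ 2 = Real.sqrt (2 / Real.pi) := by
  rw [← Real.rpow_natCast ((2/Real.pi) ^ ((1:ℝ)/4)) 2, ← Real.rpow_mul (by positivity)]
  rw [Real.sqrt_eq_rpow]
  norm_num


lemma part1 (y : ℝ → ℝ) (hy : ContDiff ℝ (⊤ : ℕ∞) y) (hcs : HasCompactSupport y) (hy0 : y 0 = 0)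
    (hnorm : (∫ x in Ioi (0:ℝ), y x ^ 2) = 1) :
    6 ≤ ∫ x in Ioi (0:ℝ), (4 * deriv y x ^ 2 + x ^ 2 * y x ^ 2) := by
  have hdiff : Differentiable ℝ y := hy.differentiable (by simp)
  have hyc : Continuous y := hy.continuous
  have hdc : Continuous (deriv y) := hy.continuous_deriv (by simp)
  have hcsd : HasCompactSupport (deriv y) := hcs.deriv
  set d := deriv y with hd
  obtain ⟨M, hM⟩ := hdc.bounded_above_of_compact_support hcsd
  obtain ⟨My, hMy⟩ := hyc.bounded_above_of_compact_support hcs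
  have hM0 : 0 ≤ M := le_trans (norm_nonneg _) (hM 0)
  have hMy0 : 0 ≤ My := le_trans (norm_nonneg _) (hMy 0)
  have hyx : ∀ x : ℝ, |y x| ≤ M * |x| := by
    intro x
    have h := Convex.norm_image_sub_le_of_norm_deriv_le (s := univ)
      (fun x _ => hdiff x) (fun x _ => hM x) convex_univ (mem_univ 0) (mem_univ x)
    simpa [hy0, Real.norm_eq_abs] using h
  -- support radius
  obtain ⟨r, hr⟩ := (Metric.isBounded_iff_subset_closedBall 0).mp
    ((hcs.isCompact.union hcsd.isCompact).isBounded)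
  set R : ℝ := max r 1 with hR
  have hR0 : 0 < R := lt_of_lt_of_le one_pos (le_max_right r 1)
  have hyR : ∀ x : ℝ, R < x → y x = 0 := by
    intro x hx
    apply image_eq_zero_of_notMem_tsupport
    intro hmem
    have := hr (Or.inl hmem)
    rw [Metric.mem_closedBall, Real.dist_eq, sub_zero] at this
    have : x ≤ R := le_trans (le_abs_self x) (le_trans this (le_max_left r 1))
    linarith
  have hdR : ∀ x : ℝ, R < x → d x = 0 := by
    intro x hx
    apply image_eq_zero_of_notMem_tsupport
    intro hmem
    have := hr (Or.inr hmem)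
    rw [Metric.mem_closedBall, Real.dist_eq, sub_zero] at this
    have : x ≤ R := le_trans (le_abs_self x) (le_trans this (le_max_left r 1))
    linarith
  set g : ℝ → ℝ := fun x => (4 * x⁻¹ - 2 * x) * y x ^ 2 with hgdef
  set g' : ℝ → ℝ := fun x => (4 * -(x^2)⁻¹ - 2) * y x ^ 2 + (4 * x⁻¹ - 2 * x) * (2 * y x * d x) with hg'def
  set q : ℝ → ℝ := fun x => (2 * d x - (2 * x⁻¹ - x) * y x) ^ 2 with hqdef
  -- derivative of g
  have hgd : ∀ x ∈ Ioi (0:ℝ), HasDerivAt g (g' x) x := by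
    intro x hx
    have h1 := ((hasDerivAt_inv (ne_of_gt hx)).const_mul (4:ℝ)).sub ((hasDerivAt_id' x).const_mul 2)
    have h2 := ((hdiff x).hasDerivAt).pow 2
    have h := h1.mul h2
    refine h.congr_deriv ?_
    simp only [hg'def, Pi.sub_apply, Pi.pow_apply, ← hd]
    push_cast
    ring
  -- continuity of g at 0 within Ici 0
  have hslope : Tendsto (fun x => y x / x) (𝓝[≠] (0:ℝ)) (nhds (d 0)) := by
    have h := hasDerivAt_iff_tendsto_slope.mp (hdiff 0).hasDerivAt
    apply h.congr
    intro x
    rw [slope_def_field, hy0, sub_zero, sub_zero]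
  have hcw : ContinuousWithinAt g (Ici 0) 0 := by
    have hytend : Tendsto y (𝓝[>] (0:ℝ)) (nhds 0) := by
      have := (hyc.tendsto 0).mono_left (nhdsWithin_le_nhds (s := Ioi (0:ℝ)))
      rwa [hy0] at this
    have hxt : Tendsto (fun x : ℝ => x) (𝓝[>] (0:ℝ)) (nhds 0) :=
      tendsto_id.mono_left (nhdsWithin_le_nhds (s := Ioi (0:ℝ)))
    have hs : Tendsto (fun x => y x / x) (𝓝[>] (0:ℝ)) (nhds (d 0)) :=
      hslope.mono_left (nhdsWithin_mono 0 (fun x hx => ne_of_gt hx))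
    have hcomb : Tendsto (fun x => 4 * (y x / x) * y x - 2 * x * y x ^ 2) (𝓝[>] (0:ℝ))
        (nhds (4 * d 0 * 0 - 2 * 0 * 0 ^ 2)) :=
      ((hs.const_mul 4).mul hytend).sub ((hxt.const_mul 2).mul (hytend.pow 2))
    have h1 : Tendsto g (𝓝[>] (0:ℝ)) (nhds 0) := by
      have hv : (4 * d 0 * 0 - 2 * 0 * 0 ^ 2 : ℝ) = 0 := by ring
      rw [hv] at hcomb
      refine hcomb.congr' ?_
      filter_upwards [self_mem_nhdsWithin] with x hx
      have hx' : (0:ℝ) < x := hx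
      simp only [hgdef]
      field_simp [hx'.ne']
    have hg0 : g 0 = 0 := by simp [hgdef, hy0]
    have hset : 𝓝[Ici (0:ℝ)] 0 = pure 0 ⊔ 𝓝[>] 0 := by
      rw [← Set.Ioi_insert, nhdsWithin_insert]
    unfold ContinuousWithinAt
    rw [hset, tendsto_sup, hg0]
    refine ⟨?_, h1⟩
    simpa [hg0] using tendsto_pure_nhds g 0
  -- tendsto at top
  have hgtop : Tendsto g atTop (nhds 0) := by
    apply Tendsto.congr' _ tendsto_const_nhds
    filter_upwards [eventually_gt_atTop R] with x hx
    simp [hgdef, hyR x hx]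
  -- integrability of q
  have hqmeas : Measurable q := by fun_prop
  have hqbound : ∀ x ∈ Ioc (0:ℝ) R, q x ≤ (4*M + R*My)^2 := by
    rintro x ⟨hx0, hxR⟩
    have e0 : |y x| ≤ M * x := by
      have := hyx x
      rwa [abs_of_pos hx0] at this
    have e1 : |2 * d x| ≤ 2 * M := by
      have h : |d x| ≤ M := by rw [← Real.norm_eq_abs]; exact hM x
      rw [abs_mul, show |(2:ℝ)| = 2 by norm_num]
      linarith
    have e2 : |2 * x⁻¹ * y x| ≤ 2 * M := by
      rw [abs_mul, abs_mul, abs_inv, abs_of_pos hx0]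
      have h2 : |(2:ℝ)| = 2 := by norm_num
      rw [h2]
      have hxi : 0 < x⁻¹ := inv_pos.mpr hx0
      calc 2 * x⁻¹ * |y x| ≤ 2 * x⁻¹ * (M * x) := by nlinarith
        _ = 2 * M := by field_simp
    have e3 : |x * y x| ≤ R * My := by
      rw [abs_mul, abs_of_pos hx0]
      have : |y x| ≤ My := by rw [← Real.norm_eq_abs]; exact hMy x
      nlinarith [abs_nonneg (y x)]
    have habs : |2 * d x - (2 * x⁻¹ - x) * y x| ≤ 4*M + R*My := by
      have h1 : (2 * x⁻¹ - x) * y x = 2 * x⁻¹ * y x - x * y x := by ring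
      calc |2 * d x - (2 * x⁻¹ - x) * y x| ≤ |2 * d x| + |(2 * x⁻¹ - x) * y x| := abs_sub _ _
        _ ≤ 2*M + (|2 * x⁻¹ * y x| + |x * y x|) := by
            rw [h1]
            exact add_le_add e1 (abs_sub _ _)
        _ ≤ 4*M + R*My := by linarith
    calc q x = |2 * d x - (2 * x⁻¹ - x) * y x| ^ 2 := by rw [sq_abs]
      _ ≤ (4*M + R*My)^2 := by
          apply pow_le_pow_left₀ (abs_nonneg _) habs
  have hqint : IntegrableOn q (Ioi 0) := by
    rw [← Ioc_union_Ioi_eq_Ioi (le_of_lt hR0)]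
    apply IntegrableOn.union
    · apply Integrable.mono' (g := fun _ => (4*M + R*My)^2)
        (integrableOn_const measure_Ioc_lt_top.ne)
        (hqmeas.aestronglyMeasurable)
      filter_upwards [ae_restrict_mem measurableSet_Ioc] with x hx
      rw [Real.norm_eq_abs, abs_of_nonneg (sq_nonneg _)]
      exact hqbound x hx
    · apply (integrable_zero _ _ _).integrableOn.congr_fun _ measurableSet_Ioi
      intro x hx
      simp [hqdef, hyR x hx.out, hdR x hx.out]
  -- integrability of the main integrand
  have hFcs : HasCompactSupport (fun x : ℝ => 4 * d x ^ 2 + x ^ 2 * y x ^ 2) := by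
    have h1 : HasCompactSupport (fun x : ℝ => 4 * d x ^ 2) := by
      have := hcsd.comp_left (g := fun t : ℝ => 4 * t ^ 2) (by norm_num)
      simpa [Function.comp_def] using this
    have h2 : HasCompactSupport (fun x : ℝ => x ^ 2 * y x ^ 2) := by
      have hy2 : HasCompactSupport (fun x : ℝ => y x ^ 2) := by
        have := hcs.comp_left (g := fun t : ℝ => t ^ 2) (by norm_num)
        simpa [Function.comp_def] using this
      have := HasCompactSupport.mul_left (f := fun x : ℝ => x ^ 2) hy2
      exact this
    have := h1.add h2
    exact this
  have hFint : IntegrableOn (fun x : ℝ => 4 * d x ^ 2 + x ^ 2 * y x ^ 2) (Ioi 0) :=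
    ((Continuous.integrable_of_hasCompactSupport (by fun_prop) hFcs)).integrableOn
  have h6cs : HasCompactSupport (fun x : ℝ => 6 * y x ^ 2) := by
    have := hcs.comp_left (g := fun t : ℝ => 6 * t ^ 2) (by norm_num)
    simpa [Function.comp_def] using this
  have h6int : IntegrableOn (fun x : ℝ => 6 * y x ^ 2) (Ioi 0) :=
    (Continuous.integrable_of_hasCompactSupport (by fun_prop) h6cs).integrableOn
  -- pointwise identity
  have hsplit : ∀ x ∈ Ioi (0:ℝ), 4 * d x ^ 2 + x ^ 2 * y x ^ 2 = 6 * y x ^ 2 + q x + g' x := by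
    intro x hx
    have hx0 : x ≠ 0 := ne_of_gt hx
    simp only [hqdef, hg'def]
    field_simp
    ring
  -- g' integrable
  have hg'int : IntegrableOn g' (Ioi 0) := by
    apply IntegrableOn.congr_fun ((hFint.sub h6int).sub hqint) _ measurableSet_Ioi
    intro x hx
    have := hsplit x hx
    simp only [Pi.sub_apply]
    linarith
  -- FTC
  have hFTC := integral_Ioi_of_hasDerivAt_of_tendsto (a := 0) (m := 0) hcw hgd hg'int hgtop
  have hg0 : g 0 = 0 := by simp [hgdef, hy0]
  rw [hg0, sub_zero] at hFTC
  -- conclude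
  have hqnn : 0 ≤ ∫ x in Ioi (0:ℝ), q x :=
    setIntegral_nonneg measurableSet_Ioi (fun x _ => sq_nonneg _)
  have heq : ∫ x in Ioi (0:ℝ), (4 * d x ^ 2 + x ^ 2 * y x ^ 2)
      = (∫ x in Ioi (0:ℝ), 6 * y x ^ 2) + (∫ x in Ioi (0:ℝ), q x) + ∫ x in Ioi (0:ℝ), g' x := by
    have hsum1 : IntegrableOn (fun x => 6 * y x ^ 2 + q x) (Ioi 0) := by
      exact h6int.add hqint
    rw [setIntegral_congr_fun measurableSet_Ioi hsplit, integral_add hsum1 hg'int,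
      integral_add h6int hqint]
  rw [heq, hFTC, integral_const_mul, hnorm]
  linarith

/-- `y(x) = (2/π)^{1/4} x e^{−x²/4}`. -/
noncomputable def y₀ (x : ℝ) : ℝ :=
  (2 / Real.pi) ^ ((1:ℝ)/4) * x * Real.exp (-x ^ 2 / 4)

lemma y0_sq (x : ℝ) : y₀ x ^ 2 = ((2/Real.pi) ^ ((1:ℝ)/4))^2 * (x ^ 2 * Real.exp (-(1/2) * x ^ 2)) := by
  unfold y₀; rw [← exp_sq x]; ring

lemma part2 : (∫ x in Ioi (0:ℝ), y₀ x ^ 2) = 1 := by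
  have h : (∫ x in Ioi (0:ℝ), y₀ x ^ 2)
      = ((2/Real.pi) ^ ((1:ℝ)/4))^2 * ∫ x in Ioi (0:ℝ), x ^ 2 * Real.exp (-(1/2)*x^2) := by
    rw [← integral_const_mul]
    exact setIntegral_congr_fun measurableSet_Ioi (fun x _ => y0_sq x)
  rw [h, int_sq_exp, int_E_val, c_sq]
  have h4 : Real.sqrt (2/Real.pi) * Real.sqrt (2*Real.pi) = 2 := by
    rw [← Real.sqrt_mul (by positivity),
      show (2/Real.pi) * (2*Real.pi) = 4 by field_simp; ring,
      show (4:ℝ) = 2^2 by norm_num, Real.sqrt_sq (by norm_num)]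
  rw [← mul_div_assoc, h4]; norm_num

lemma y0_hasDeriv (x : ℝ) : HasDerivAt y₀
    ((2/Real.pi) ^ ((1:ℝ)/4) * ((1 - x^2/2) * Real.exp (-x^2/4))) x := by
  have h1 := (((hasDerivAt_pow 2 x).neg.div_const 4)).exp
  have h2 : HasDerivAt (fun x : ℝ => (2/Real.pi) ^ ((1:ℝ)/4) * x) ((2/Real.pi) ^ ((1:ℝ)/4)) x := by
    simpa using (hasDerivAt_id x).const_mul ((2/Real.pi) ^ ((1:ℝ)/4))
  have h3 := h2.mul h1
  have : y₀ = fun x => (2/Real.pi) ^ ((1:ℝ)/4) * x * Real.exp (-x^2/4) := rfl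
  rw [this]
  refine h3.congr_deriv ?_
  push_cast
  simp only [Pi.neg_apply]
  ring

lemma part3 : (∫ x in Ioi (0:ℝ), (4 * deriv y₀ x ^ 2 + x ^ 2 * y₀ x ^ 2)) = 6 := by
  set c : ℝ := (2/Real.pi) ^ ((1:ℝ)/4) with hc
  set G : ℝ → ℝ := fun x => c^2 * ((4*x - 2*x^3) * Real.exp (-(1/2)*x^2)) with hG
  set G' : ℝ → ℝ := fun x => c^2 * ((4 - 10*x^2 + 2*x^4) * Real.exp (-(1/2)*x^2)) with hG'
  have hGd : ∀ x : ℝ, HasDerivAt G (G' x) x := by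
    intro x
    have hE := ((hasDerivAt_pow 2 x).const_mul (-(1/2):ℝ)).exp
    have hP := (((hasDerivAt_id x).const_mul (4:ℝ)).sub ((hasDerivAt_pow 3 x).const_mul 2))
    have h := (hP.mul hE).const_mul (c^2)
    refine h.congr_deriv ?_
    simp only [hG', id_eq, Pi.sub_apply]
    push_cast
    ring
  have hGint : IntegrableOn G' (Ioi 0) := by
    have h := ((((intOn_E.const_mul 4).sub ((intOn_pow_exp 2).const_mul 10)).add
      ((intOn_pow_exp 4).const_mul 2)).const_mul (c^2))
    exact IntegrableOn.congr_fun h (fun x _ => by simp only [hG', Pi.add_apply, Pi.sub_apply]; ring) measurableSet_Ioi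
  have hGtend : Tendsto G atTop (nhds 0) := by
    have h := (((tendsto_pow_exp 1).const_mul (4:ℝ)).sub ((tendsto_pow_exp 3).const_mul 2)).const_mul (c^2)
    simp only [mul_zero, sub_zero, zero_sub, pow_one] at h
    norm_num at h
    apply h.congr
    intro x; simp only [hG]; ring
  have hFTC := integral_Ioi_of_hasDerivAt_of_tendsto (a := 0) (m := 0)
    (Continuous.continuousWithinAt (by fun_prop)) (fun x _ => hGd x) hGint hGtend
  have hG0 : G 0 = 0 := by simp [hG]
  rw [hG0, sub_zero] at hFTC
  have hsplit : ∀ x ∈ Ioi (0:ℝ), 4 * deriv y₀ x ^ 2 + x ^ 2 * y₀ x ^ 2 = 6 * y₀ x ^ 2 + G' x := by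
    intro x _
    rw [(y0_hasDeriv x).deriv]
    show 4 * (c * ((1 - x^2/2) * Real.exp (-x^2/4))) ^ 2 + x^2 * y₀ x ^2 = _
    have hy : y₀ x = c * x * Real.exp (-x^2/4) := rfl
    rw [hy]; simp only [hG']; rw [← exp_sq x]
    ring
  have h6int : IntegrableOn (fun x : ℝ => 6 * y₀ x ^ 2) (Ioi 0) := by
    have h := (intOn_pow_exp 2).const_mul (6 * c^2)
    exact IntegrableOn.congr_fun h (fun x _ => by rw [y0_sq x]; ring) measurableSet_Ioi
  rw [setIntegral_congr_fun measurableSet_Ioi hsplit, integral_add h6int hGint, hFTC,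
    integral_const_mul, part2]
  norm_num

/-- for every smooth compactly supported `y` with `y 0 = 0` and
`∫₀^∞ y² = 1` one has `∫₀^∞ (4 y'² + x² y²) dx ≥ 6`, with equality for
`y₀(x) = (2/π)^{1/4} x e^{−x²/4}`. -/
theorem stmt_15 :
    (∀ y : ℝ → ℝ, ContDiff ℝ (⊤ : ℕ∞) y → HasCompactSupport y → y 0 = 0 →
      (∫ x in Ioi (0:ℝ), y x ^ 2) = 1 →
      6 ≤ ∫ x in Ioi (0:ℝ), (4 * deriv y x ^ 2 + x ^ 2 * y x ^ 2)) ∧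
    (∫ x in Ioi (0:ℝ), y₀ x ^ 2) = 1 ∧
    (∫ x in Ioi (0:ℝ), (4 * deriv y₀ x ^ 2 + x ^ 2 * y₀ x ^ 2)) = 6 := by
  exact ⟨fun y a b c e => part1 y a b c e, part2, part3⟩
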